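/- arXiv:2311.12544 — 2 statements merged into one kernel-verified Lean document; each statement's English description precedes it below -/
import Mathlib

section
/- Let Λ = Bℤ^d (B ∈ GL_d(ℝ)) be a full-rank lattice in ℝ^d, let G be a countable subgroup of GL_d(ℝ) such that gΛ = Λ for every g ∈ G (so that |det g| = 1 and each R_g is unitary on L²(ℝ^d)), and let ℓ be a positive integer. Let F = {f_1, …, f_m} ⊆ L²(ℝ^d) be a finite family. Then for every family Ψ ⊆ L²(ℝ^d) with at most ℓ elements there exists a family Φ ⊆ S_Γ(F) with at most ℓ elements such that S_Γ(Φ) ⊆ S_Γ(F) and E(F, S_Γ(Φ)) ≤ E(F, S_Γ(Ψ)). -/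
open MeasureTheory

noncomputable section

open scoped Classical in
/-- Orthogonal projection onto a submodule (zero if no orthogonal projection exists). -/
def proj {𝕜 H : Type*} [RCLike 𝕜] [NormedAddCommGroup H] [InnerProductSpace 𝕜 H]
    (V : Submodule 𝕜 H) (x : H) : H :=
  if h : Submodule.HasOrthogonalProjection V then (@Submodule.orthogonalProjectionOnto 𝕜 H _ _ _ V h x : H) else 0

/-- The approximation error `E(F, S) = ∑ i, ‖f i - P_S (f i)‖²`. -/
def err {𝕜 H : Type*} [RCLike 𝕜] [NormedAddCommGroup H] [InnerProductSpace 𝕜 H]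
    {m : ℕ} (F : Fin m → H) (S : Submodule 𝕜 H) : ℝ :=
  ∑ i, ‖F i - proj S (F i)‖ ^ 2

abbrev Rd (d : ℕ) := EuclideanSpace ℝ (Fin d)
abbrev L2 (d : ℕ) := Lp ℂ 2 (volume : Measure (Rd d))

/-- The integer lattice `ℤ^d` inside `ℝ^d`. -/
def zdLattice (d : ℕ) : Set (Rd d) := {x | ∀ i, ∃ n : ℤ, x i = (n : ℝ)}

/-- The `Γ`-invariant space generated by `Φ`, for `Γ = Λ ⋊ G`: the closed span of
`{t_λ R_g φ : λ ∈ Λ, g ∈ G, φ ∈ Φ}`, where `t_λ R_g φ (x) = φ (g⁻¹ (x - λ))` a.e. -/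
def SGamma {d : ℕ} (Λ : Set (Rd d)) (G : Subgroup ((Rd d) ≃ₗ[ℝ] (Rd d)))
    (Φ : Set (L2 d)) : Submodule ℂ (L2 d) :=
  (Submodule.span ℂ {h : L2 d | ∃ l ∈ Λ, ∃ g ∈ G, ∃ φ ∈ Φ,
    (h : Rd d → ℂ) =ᵐ[volume] fun x => φ (g.symm (x - l))}).topologicalClosure

/-! ### Auxiliary lemmas -/

namespace BGIAux

variable {d : ℕ}

/-- A linear automorphism mapping `ℤ^d` onto itself has `|det| = 1`. -/
lemma det_of_zd (h : (Rd d) ≃ₗ[ℝ] (Rd d)) (hh : ⇑h '' zdLattice d = zdLattice d) :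
    |LinearMap.det (h : (Rd d) →ₗ[ℝ] (Rd d))| = 1 := by
  classical
  have hsymm : ⇑h.symm '' zdLattice d = zdLattice d := by
    conv_lhs => rw [← hh, ← Set.image_comp]
    simp [Function.comp_def]
  set b := (EuclideanSpace.basisFun (Fin d) ℝ).toBasis with hb
  have hbz : ∀ j, b j ∈ zdLattice d := by
    intro j i
    by_cases hij : i = j
    · exact ⟨1, by simp [hb, hij, EuclideanSpace.basisFun_apply]⟩
    · exact ⟨0, by simp [hb, EuclideanSpace.basisFun_apply, EuclideanSpace.single_apply, hij]⟩
  have key : ∀ (f : (Rd d) ≃ₗ[ℝ] (Rd d)), ⇑f '' zdLattice d = zdLattice d →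
      ∃ N : Matrix (Fin d) (Fin d) ℤ,
        N.map (Int.cast : ℤ → ℝ) = LinearMap.toMatrix b b (f : (Rd d) →ₗ[ℝ] (Rd d)) := by
    intro f hf
    have hint : ∀ i j, ∃ n : ℤ, LinearMap.toMatrix b b (f : (Rd d) →ₗ[ℝ] (Rd d)) i j = (n : ℝ) := by
      intro i j
      have : f (b j) ∈ zdLattice d := hf ▸ Set.mem_image_of_mem _ (hbz j)
      obtain ⟨n, hn⟩ := this i
      exact ⟨n, by rw [LinearMap.toMatrix_apply]; simpa [hb, EuclideanSpace.basisFun_repr] using hn⟩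
    refine ⟨fun i j => (hint i j).choose, ?_⟩
    ext i j
    exact (hint i j).choose_spec.symm
  obtain ⟨N, hN⟩ := key h hh
  obtain ⟨N', hN'⟩ := key h.symm hsymm
  have hmul : N * N' = 1 := by
    have : (N * N').map (Int.cast : ℤ → ℝ) = (1 : Matrix (Fin d) (Fin d) ℤ).map Int.cast := by
      have hmm : (N * N').map (Int.cast : ℤ → ℝ) = N.map Int.cast * N'.map Int.cast := by
        ext i j; simp [Matrix.map_apply, Matrix.mul_apply]
      rw [hmm, hN, hN', ← LinearMap.toMatrix_comp, Matrix.map_one _ Int.cast_zero Int.cast_one]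
      have : (h : (Rd d) →ₗ[ℝ] (Rd d)) ∘ₗ (h.symm : (Rd d) →ₗ[ℝ] (Rd d)) = LinearMap.id := by
        ext x; simp
      rw [this, LinearMap.toMatrix_id]
    ext i j
    have := congrFun (congrFun this i) j
    simpa [Matrix.map_apply] using Int.cast_injective this
  have hdetN : N.det = 1 ∨ N.det = -1 := by
    have : IsUnit N.det := by
      refine IsUnit.of_mul_eq_one N'.det ?_
      rw [← Matrix.det_mul, hmul, Matrix.det_one]
    exact Int.isUnit_iff.mp this
  have : LinearMap.det (h : (Rd d) →ₗ[ℝ] (Rd d)) = ((N.det : ℤ) : ℝ) := by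
    rw [← LinearMap.det_toMatrix b, ← hN]
    have := (Int.castRingHom ℝ).map_det N
    simpa [RingHom.mapMatrix_apply] using this.symm
  rcases hdetN with h1 | h1 <;> rw [this, h1] <;> norm_num

lemma mp_lin (g : (Rd d) ≃ₗ[ℝ] (Rd d))
    (hdet : |LinearMap.det (g : (Rd d) →ₗ[ℝ] (Rd d))| = 1) :
    MeasurePreserving (⇑g) (volume : Measure (Rd d)) volume := by
  have hd0 : LinearMap.det (g : (Rd d) →ₗ[ℝ] (Rd d)) ≠ 0 := by
    intro h0; rw [h0] at hdet; simp at hdet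
  refine ⟨(g.toLinearMap.continuous_of_finiteDimensional).measurable, ?_⟩
  have := Measure.map_linearMap_addHaar_eq_smul_addHaar (volume : Measure (Rd d)) hd0
  have habs : |(LinearMap.det (g : (Rd d) →ₗ[ℝ] (Rd d)))⁻¹| = 1 := by
    rw [abs_inv, hdet]; norm_num
  rw [habs] at this
  simpa using this

lemma det_symm {g : (Rd d) ≃ₗ[ℝ] (Rd d)}
    (h : |LinearMap.det (g : (Rd d) →ₗ[ℝ] (Rd d))| = 1) :
    |LinearMap.det (g.symm : (Rd d) →ₗ[ℝ] (Rd d))| = 1 := by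
  have hc : LinearMap.det (g.symm : (Rd d) →ₗ[ℝ] (Rd d)) *
      LinearMap.det (g : (Rd d) →ₗ[ℝ] (Rd d)) = 1 := by
    rw [← LinearMap.det_comp]
    have : (g.symm : (Rd d) →ₗ[ℝ] (Rd d)) ∘ₗ (g : (Rd d) →ₗ[ℝ] (Rd d)) = LinearMap.id := by
      ext x; simp
    rw [this, LinearMap.det_id]
  have := congrArg abs hc
  rw [abs_mul, h, mul_one] at this
  simpa using this

/-- The affine map `x ↦ g⁻¹ (x - l)` is measure preserving when `|det g| = 1`. -/
lemma mpm (g : (Rd d) ≃ₗ[ℝ] (Rd d))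
    (hdet : |LinearMap.det (g : (Rd d) →ₗ[ℝ] (Rd d))| = 1) (l : Rd d) :
    MeasurePreserving (fun x : Rd d => g.symm (x - l)) volume volume := by
  have h2 := det_symm hdet
  have heq : (fun x : Rd d => g.symm (x - l)) = (⇑g.symm) ∘ (fun x : Rd d => x + (-l)) := by
    funext x; simp [sub_eq_add_neg, Function.comp]
  rw [heq]
  exact (mp_lin g.symm h2).comp (measurePreserving_add_right volume (-l))

/-- The unitary `f ↦ f(g⁻¹(· - l))` on `L²`. -/
def Uop (g : (Rd d) ≃ₗ[ℝ] (Rd d))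
    (hdet : |LinearMap.det (g : (Rd d) →ₗ[ℝ] (Rd d))| = 1) (l : Rd d) :
    L2 d →ₗᵢ[ℂ] L2 d :=
  Lp.compMeasurePreservingₗᵢ ℂ _ (mpm g hdet l)

lemma Uop_coeFn (g : (Rd d) ≃ₗ[ℝ] (Rd d))
    (hdet : |LinearMap.det (g : (Rd d) →ₗ[ℝ] (Rd d))| = 1) (l : Rd d) (f : L2 d) :
    (Uop g hdet l f : Rd d → ℂ) =ᵐ[volume] fun x => f (g.symm (x - l)) :=
  Lp.coeFn_compMeasurePreserving f (mpm g hdet l)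

lemma T_cancel {m m' : Rd d → Rd d} (hm : MeasurePreserving m volume volume)
    (hm' : MeasurePreserving m' volume volume) (hc : ∀ x, m (m' x) = x) (f : L2 d) :
    Lp.compMeasurePreservingₗᵢ ℂ m' hm' (Lp.compMeasurePreservingₗᵢ ℂ m hm f) = f := by
  apply Lp.ext
  have h1 : (Lp.compMeasurePreservingₗᵢ ℂ m' hm'
        (Lp.compMeasurePreservingₗᵢ ℂ m hm f) : Rd d → ℂ) =ᵐ[volume]
      ((Lp.compMeasurePreservingₗᵢ ℂ m hm f : Rd d → ℂ) ∘ m') :=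
    Lp.coeFn_compMeasurePreserving _ hm'
  have h2 : ((Lp.compMeasurePreservingₗᵢ ℂ m hm f : Rd d → ℂ) ∘ m') =ᵐ[volume]
      ((f : Rd d → ℂ) ∘ m) ∘ m' := by
    refine ae_eq_comp hm'.aemeasurable ?_
    rw [hm'.map_eq]
    exact Lp.coeFn_compMeasurePreserving f hm
  refine h1.trans (h2.trans ?_)
  have : (((f : Rd d → ℂ) ∘ m) ∘ m') = (f : Rd d → ℂ) := by
    funext x; simp [Function.comp, hc x]
  rw [this]

lemma Uop_cancel₁ (g : (Rd d) ≃ₗ[ℝ] (Rd d))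
    (hdet : |LinearMap.det (g : (Rd d) →ₗ[ℝ] (Rd d))| = 1) (l : Rd d) (f : L2 d) :
    Uop g.symm (det_symm hdet) (-(g.symm l)) (Uop g hdet l f) = f := by
  refine T_cancel _ _ (fun x => ?_) f
  show g.symm (g.symm.symm (x - -(g.symm l)) - l) = x
  simp [sub_neg_eq_add, map_add]

lemma Uop_cancel₂ (g : (Rd d) ≃ₗ[ℝ] (Rd d))
    (hdet : |LinearMap.det (g : (Rd d) →ₗ[ℝ] (Rd d))| = 1) (l : Rd d) (f : L2 d) :
    Uop g hdet l (Uop g.symm (det_symm hdet) (-(g.symm l)) f) = f := by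
  refine T_cancel _ _ (fun x => ?_) f
  show g.symm.symm (g.symm (x - l) - -(g.symm l)) = x
  simp [sub_neg_eq_add, ← map_add]

lemma proj_congr {K K' : Submodule ℂ (L2 d)} [K.HasOrthogonalProjection]
    [K'.HasOrthogonalProjection] (h : K = K') (u : L2 d) :
    (K.orthogonalProjectionOnto u : L2 d) = (K'.orthogonalProjectionOnto u : L2 d) := by
  subst h; rfl

end BGIAux

open BGIAux

set_option maxHeartbeats 1600000

/-- For every `Γ`-invariant space `S_Γ(Ψ)` generated by at most `ℓ` functions there is a
`Γ`-invariant space generated by at most `ℓ` elements of `S_Γ(F)`, contained in `S_Γ(F)`,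
approximating the data `F` at least as well. -/
theorem best_gamma_invariant_inside_data_space {d m : ℕ}
    (B : (Rd d) ≃ₗ[ℝ] (Rd d)) (Λ : Set (Rd d)) (hΛ : Λ = ⇑B '' zdLattice d)
    (G : Subgroup ((Rd d) ≃ₗ[ℝ] (Rd d))) [Countable G]
    (hG : ∀ g ∈ G, ⇑g '' Λ = Λ)
    (ℓ : ℕ) (hℓ : 0 < ℓ) (F : Fin m → L2 d) :
    ∀ Ψ : Finset (L2 d), Ψ.card ≤ ℓ →
      ∃ Φ : Finset (L2 d), Φ.card ≤ ℓ ∧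
        (Φ : Set (L2 d)) ⊆ (SGamma Λ G (Set.range F) : Set (L2 d)) ∧
        SGamma Λ G (Φ : Set (L2 d)) ≤ SGamma Λ G (Set.range F) ∧
        err F (SGamma Λ G (Φ : Set (L2 d))) ≤ err F (SGamma Λ G (Ψ : Set (L2 d))) := by
  intro Ψ hΨcard
  classical
  -- basic lattice facts
  have hΛ0 : (0 : Rd d) ∈ Λ := by
    rw [hΛ]
    exact ⟨0, fun i => ⟨0, by simp⟩, by simp⟩
  have hΛadd : ∀ a ∈ Λ, ∀ b ∈ Λ, a + b ∈ Λ := by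
    rw [hΛ]
    rintro _ ⟨a, ha, rfl⟩ _ ⟨b, hb, rfl⟩
    refine ⟨a + b, fun i => ?_, by simp⟩
    obtain ⟨n, hn⟩ := ha i
    obtain ⟨k, hk⟩ := hb i
    exact ⟨n + k, by push_cast; simp [hn, hk]⟩
  have hΛneg : ∀ a ∈ Λ, -a ∈ Λ := by
    rw [hΛ]
    rintro _ ⟨a, ha, rfl⟩
    refine ⟨-a, fun i => ?_, by simp⟩
    obtain ⟨n, hn⟩ := ha i
    exact ⟨-n, by push_cast; simp [hn]⟩
  have hGΛ : ∀ g ∈ G, ∀ a ∈ Λ, g a ∈ Λ := fun g hg a ha => (hG g hg) ▸ ⟨a, ha, rfl⟩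
  have hsymmG : ∀ g ∈ G, g.symm ∈ G := by
    intro g hg
    have : g⁻¹ = g.symm := rfl
    exact this ▸ inv_mem hg
  -- determinant fact
  have hdet : ∀ g ∈ G, |LinearMap.det (g : (Rd d) →ₗ[ℝ] (Rd d))| = 1 := by
    intro g hg
    have him : ⇑(B ≪≫ₗ g ≪≫ₗ B.symm) '' zdLattice d = zdLattice d := by
      have hco : ⇑(B ≪≫ₗ g ≪≫ₗ B.symm) = ⇑B.symm ∘ ⇑g ∘ ⇑B := rfl
      rw [hco, Set.image_comp, Set.image_comp, ← hΛ, hG g hg, hΛ, ← Set.image_comp]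
      simp [Function.comp_def]
    have hz := det_of_zd _ him
    have heq : ((B ≪≫ₗ g ≪≫ₗ B.symm) : (Rd d) →ₗ[ℝ] (Rd d)) =
        (B.symm : (Rd d) →ₗ[ℝ] (Rd d)) ∘ₗ (g : (Rd d) →ₗ[ℝ] (Rd d)) ∘ₗ
          (B.symm.symm : (Rd d) →ₗ[ℝ] (Rd d)) := by
      ext x; simp
    rw [heq, LinearMap.det_conj] at hz
    exact hz
  -- generator sets
  set gen : Set (L2 d) → Set (L2 d) := fun Φ => {h : L2 d | ∃ l ∈ Λ, ∃ g ∈ G, ∃ φ ∈ Φ,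
    (h : Rd d → ℂ) =ᵐ[volume] fun x => φ (g.symm (x - l))} with hgen
  have hSGdef : ∀ Φ : Set (L2 d), SGamma Λ G Φ = (Submodule.span ℂ (gen Φ)).topologicalClosure :=
    fun _ => rfl
  have hcl : ∀ Φ : Set (L2 d), IsClosed ((SGamma Λ G Φ : Submodule ℂ (L2 d)) : Set (L2 d)) :=
    fun Φ => Submodule.isClosed_topologicalClosure _
  have hOP : ∀ Φ : Set (L2 d), Submodule.HasOrthogonalProjection (SGamma Λ G Φ) := by
    intro Φ
    haveI : CompleteSpace (SGamma Λ G Φ) := (hcl Φ).completeSpace_coe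
    infer_instance
  -- a generator is the image of its `φ` under `Uop`
  have hgenU : ∀ (h : L2 d) (l : Rd d) (g : (Rd d) ≃ₗ[ℝ] (Rd d)) (hg : g ∈ G) (φ : L2 d),
      ((h : Rd d → ℂ) =ᵐ[volume] fun x => φ (g.symm (x - l))) →
        h = Uop g (hdet g hg) l φ := by
    intro h l g hg φ hae
    apply Lp.ext
    exact hae.trans (Uop_coeFn g (hdet g hg) l φ).symm
  -- `Uop` maps generators to generators
  have hUmem : ∀ (Φ : Set (L2 d)) (l : Rd d), l ∈ Λ → ∀ (g : (Rd d) ≃ₗ[ℝ] (Rd d)) (hg : g ∈ G),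
      ∀ h ∈ gen Φ, Uop g (hdet g hg) l h ∈ gen Φ := by
    rintro Φ l hl g hg h ⟨l', hl', g', hg', φ, hφ, hae⟩
    refine ⟨l + g l', hΛadd l hl _ (hGΛ g hg l' hl'), g * g', mul_mem hg hg', φ, hφ, ?_⟩
    have h1 := Uop_coeFn g (hdet g hg) l h
    have h2 : ((h : Rd d → ℂ) ∘ (fun x => g.symm (x - l))) =ᵐ[volume]
        ((fun x => φ (g'.symm (x - l'))) ∘ (fun x => g.symm (x - l))) := by
      refine ae_eq_comp (mpm g (hdet g hg) l).aemeasurable ?_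
      rw [(mpm g (hdet g hg) l).map_eq]
      exact hae
    have h3 : ((fun x => φ (g'.symm (x - l'))) ∘ (fun x : Rd d => g.symm (x - l))) =
        fun x => φ ((g * g').symm (x - (l + g l'))) := by
      funext x
      show φ (g'.symm (g.symm (x - l) - l')) = φ ((g * g').symm (x - (l + g l')))
      have hmul : (g * g').symm (x - (l + g l')) = g'.symm (g.symm (x - (l + g l'))) := rfl
      rw [hmul]
      have hstep : g.symm (x - (l + g l')) = g.symm (x - l) - l' := by
        rw [show x - (l + g l') = (x - l) - g l' from by abel, map_sub,
          LinearEquiv.symm_apply_apply]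
      rw [hstep]
    calc (Uop g (hdet g hg) l h : Rd d → ℂ)
        =ᵐ[volume] ((h : Rd d → ℂ) ∘ (fun x => g.symm (x - l))) := h1
      _ =ᵐ[volume] ((fun x => φ (g'.symm (x - l'))) ∘ (fun x => g.symm (x - l))) := h2
      _ = fun x => φ ((g * g').symm (x - (l + g l'))) := h3
  -- `Uop` maps `SGamma Φ` into itself
  have hUSG : ∀ (Φ : Set (L2 d)) (l : Rd d), l ∈ Λ → ∀ (g : (Rd d) ≃ₗ[ℝ] (Rd d)) (hg : g ∈ G),
      ∀ x ∈ SGamma Λ G Φ, Uop g (hdet g hg) l x ∈ SGamma Λ G Φ := by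
    intro Φ l hl g hg
    suffices hle : SGamma Λ G Φ ≤
        Submodule.comap (Uop g (hdet g hg) l).toLinearMap (SGamma Λ G Φ) from
      fun x hx => hle hx
    rw [hSGdef]
    refine Submodule.topologicalClosure_minimal _ ?_ ?_
    · rw [Submodule.span_le]
      intro h hh
      have := hUmem Φ l hl g hg h hh
      exact Submodule.le_topologicalClosure _ (Submodule.subset_span this)
    · exact (hcl Φ).preimage (Uop g (hdet g hg) l).continuous
  -- the data space
  set S : Submodule ℂ (L2 d) := SGamma Λ G (Set.range F) with hS
  haveI : Submodule.HasOrthogonalProjection S := hOP _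
  -- `Uop` maps `S` onto `S`
  have hSmap : ∀ (l : Rd d), l ∈ Λ → ∀ (g : (Rd d) ≃ₗ[ℝ] (Rd d)) (hg : g ∈ G),
      Submodule.map (Uop g (hdet g hg) l).toLinearMap S = S := by
    intro l hl g hg
    apply le_antisymm
    · rw [Submodule.map_le_iff_le_comap]
      exact fun x hx => hUSG _ l hl g hg x hx
    · intro x hx
      have hgs := hsymmG g hg
      have hls : -(g.symm l) ∈ Λ := hΛneg _ (hGΛ g.symm hgs l hl)
      have hy : Uop g.symm (hdet g.symm hgs) (-(g.symm l)) x ∈ S :=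
        hUSG _ _ hls g.symm hgs x hx
      refine ⟨Uop g.symm (hdet g.symm hgs) (-(g.symm l)) x, hy, ?_⟩
      show Uop g (hdet g hg) l (Uop g.symm (hdet g.symm hgs) (-(g.symm l)) x) = x
      have : Uop g.symm (hdet g.symm hgs) (-(g.symm l)) x
          = Uop g.symm (det_symm (hdet g hg)) (-(g.symm l)) x := rfl
      rw [this]
      exact Uop_cancel₂ g (hdet g hg) l x
  -- projection onto S
  set P : L2 d → L2 d := fun x => (Submodule.orthogonalProjectionOnto S x : L2 d) with hP
  -- commutation of P with Uop
  have hcomm : ∀ (l : Rd d), l ∈ Λ → ∀ (g : (Rd d) ≃ₗ[ℝ] (Rd d)) (hg : g ∈ G), ∀ x : L2 d,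
      P (Uop g (hdet g hg) l x) = Uop g (hdet g hg) l (P x) := by
    intro l hl g hg x
    haveI hm : Submodule.HasOrthogonalProjection (Submodule.map (Uop g (hdet g hg) l).toLinearMap S) := by
      rw [hSmap l hl g hg]; infer_instance
    have hmo : Uop g (hdet g hg) l (Submodule.orthogonalProjectionOnto S x : L2 d) =
        (Submodule.orthogonalProjectionOnto (Submodule.map (Uop g (hdet g hg) l).toLinearMap S)
          (Uop g (hdet g hg) l x) : L2 d) :=
      (Uop g (hdet g hg) l).map_starProjection S x
    have heqS := proj_congr (hSmap l hl g hg)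
      (Uop g (hdet g hg) l x)
    rw [hP]
    dsimp only
    rw [← heqS, ← hmo]
  -- the candidate family
  set Φ : Finset (L2 d) := Ψ.image P with hΦ
  have hΦS : ∀ φ ∈ (Φ : Set (L2 d)), φ ∈ S := by
    intro φ hφ
    rw [hΦ] at hφ
    simp only [Finset.coe_image, Set.mem_image, Finset.mem_coe] at hφ
    obtain ⟨ψ, _, rfl⟩ := hφ
    exact SetLike.coe_mem _
  -- SGamma Φ ≤ S
  have hSGΦ_le_S : SGamma Λ G (Φ : Set (L2 d)) ≤ S := by
    rw [hSGdef]
    refine Submodule.topologicalClosure_minimal _ ?_ (hcl _)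
    rw [Submodule.span_le]
    rintro h ⟨l, hl, g, hg, φ, hφ, hae⟩
    rw [hgenU h l g hg φ hae]
    exact hUSG _ l hl g hg φ (hΦS φ hφ)
  -- P maps SGamma Ψ into SGamma Φ
  have hPmaps : ∀ x ∈ SGamma Λ G (Ψ : Set (L2 d)), P x ∈ SGamma Λ G (Φ : Set (L2 d)) := by
    set Pc : L2 d →L[ℂ] L2 d := S.subtypeL.comp (Submodule.orthogonalProjectionOnto S) with hPc
    have hPcP : ∀ x, Pc x = P x := fun x => rfl
    suffices hle : SGamma Λ G (Ψ : Set (L2 d)) ≤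
        Submodule.comap (Pc : L2 d →ₗ[ℂ] L2 d) (SGamma Λ G (Φ : Set (L2 d))) by
      intro x hx
      have := hle hx
      rw [Submodule.mem_comap] at this
      rw [← hPcP]
      exact this
    rw [hSGdef (Ψ : Set (L2 d))]
    refine Submodule.topologicalClosure_minimal _ ?_ ?_
    · rw [Submodule.span_le]
      rintro h ⟨l, hl, g, hg, ψ, hψ, hae⟩
      have hid := hgenU h l g hg ψ hae
      have hmemΦ : P ψ ∈ (Φ : Set (L2 d)) := by
        rw [hΦ]
        simp only [Finset.coe_image, Set.mem_image, Finset.mem_coe]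
        exact ⟨ψ, Finset.mem_coe.mp hψ, rfl⟩
      have hgenmem : Uop g (hdet g hg) l (P ψ) ∈ gen (Φ : Set (L2 d)) :=
        ⟨l, hl, g, hg, P ψ, hmemΦ, Uop_coeFn g (hdet g hg) l (P ψ)⟩
      have : P h ∈ SGamma Λ G (Φ : Set (L2 d)) := by
        rw [hid, hcomm l hl g hg ψ, hSGdef]
        exact Submodule.le_topologicalClosure _ (Submodule.subset_span hgenmem)
      simpa [Submodule.mem_comap, hPcP] using this
    · exact ((hcl (Φ : Set (L2 d))).preimage Pc.continuous)
  -- each F i lies in S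
  have hFS : ∀ i, F i ∈ S := by
    intro i
    have hgen0 : F i ∈ gen (Set.range F) := by
      refine ⟨0, hΛ0, 1, one_mem _, F i, ⟨i, rfl⟩, ?_⟩
      refine Filter.Eventually.of_forall (fun x => ?_)
      show (F i : Rd d → ℂ) x = (F i : Rd d → ℂ) ((1 : (Rd d) ≃ₗ[ℝ] (Rd d)).symm (x - 0))
      rw [sub_zero]
      rfl
    rw [hS, hSGdef]
    exact Submodule.le_topologicalClosure _ (Submodule.subset_span hgen0)
  -- conclusion
  refine ⟨Φ, ?_, ?_, hSGΦ_le_S, ?_⟩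
  · exact (Finset.card_image_le).trans hΨcard
  · intro φ hφ
    exact hΦS φ hφ
  · -- error comparison
    haveI hOPΦ : Submodule.HasOrthogonalProjection (SGamma Λ G (Φ : Set (L2 d))) := hOP _
    haveI hOPΨ : Submodule.HasOrthogonalProjection (SGamma Λ G (Ψ : Set (L2 d))) := hOP _
    rw [err, err]
    refine Finset.sum_le_sum (fun i _ => ?_)
    have hprojΦ : proj (SGamma Λ G (Φ : Set (L2 d))) (F i)
        = (Submodule.orthogonalProjectionOnto (SGamma Λ G (Φ : Set (L2 d))) (F i) : L2 d) := by
      rw [proj, dif_pos hOPΦ]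
    have hprojΨ : proj (SGamma Λ G (Ψ : Set (L2 d))) (F i)
        = (Submodule.orthogonalProjectionOnto (SGamma Λ G (Ψ : Set (L2 d))) (F i) : L2 d) := by
      rw [proj, dif_pos hOPΨ]
    rw [hprojΦ, hprojΨ]
    set a := F i with ha
    set w : L2 d := (Submodule.orthogonalProjectionOnto (SGamma Λ G (Ψ : Set (L2 d))) a : L2 d) with hw
    have hPwΦ : P w ∈ SGamma Λ G (Φ : Set (L2 d)) :=
      hPmaps w (SetLike.coe_mem _)
    have h1 : ‖a - (Submodule.orthogonalProjectionOnto (SGamma Λ G (Φ : Set (L2 d))) a : L2 d)‖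
        ≤ ‖a - P w‖ := by
      rw [← Submodule.starProjection_apply (SGamma Λ G (Φ : Set (L2 d))), Submodule.starProjection_minimal]
      exact ciInf_le ⟨0, by rintro r ⟨x, rfl⟩; exact norm_nonneg _⟩
        (⟨P w, hPwΦ⟩ : SGamma Λ G (Φ : Set (L2 d)))
    have hPa : P a = a := by
      rw [hP]
      exact Submodule.starProjection_eq_self_iff.mpr (hFS i)
    have h2 : a - P w = (Submodule.orthogonalProjectionOnto S (a - w) : L2 d) := by
      have hms : Submodule.orthogonalProjectionOnto S (a - w)
          = Submodule.orthogonalProjectionOnto S a - Submodule.orthogonalProjectionOnto S w := map_sub _ a w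
      rw [hms, Submodule.coe_sub,
        show ((Submodule.orthogonalProjectionOnto S a : S) : L2 d) = P a from rfl, hPa]
    have h3 : ‖(Submodule.orthogonalProjectionOnto S (a - w) : L2 d)‖ ≤ ‖a - w‖ := by
      have hb := (Submodule.orthogonalProjectionOnto S).le_opNorm (a - w)
      have hn := Submodule.orthogonalProjectionOnto_norm_le S
      have : ‖(Submodule.orthogonalProjectionOnto S (a - w) : L2 d)‖
          = ‖Submodule.orthogonalProjectionOnto S (a - w)‖ := rfl
      rw [this]
      nlinarith [norm_nonneg (a - w)]
    have hfinal : ‖a - (Submodule.orthogonalProjectionOnto (SGamma Λ G (Φ : Set (L2 d))) a : L2 d)‖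
        ≤ ‖a - w‖ := by
      refine h1.trans ?_
      rw [h2]
      exact h3
    have h0 : (0:ℝ) ≤ ‖a - (Submodule.orthogonalProjectionOnto (SGamma Λ G (Φ : Set (L2 d))) a : L2 d)‖ :=
      norm_nonneg _
    exact pow_le_pow_left₀ h0 hfinal 2
end
end

section
/- Let G be a finite subgroup of GL_d(ℝ) such that gℤ^d = ℤ^d for every g ∈ G, and let P ⊆ ℝ^d be a measurable set of finite positive Lebesgue measure such that, up to a set of measure zero, ℝ^d is the disjoint union of the sets {gP + k : g ∈ G, k ∈ ℤ^d}. Then the set D = ∪_{k ∈ ℤ^d} (P + k) is measurable and, up to a set of measure zero, ℝ^d is the disjoint union of the sets {gD : g ∈ G}; in particular D is a measurable section of the quotient of ℝ^d by the G-action. -/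
open MeasureTheory

noncomputable section

lemma zdLattice_countable (d : ℕ) : (zdLattice d).Countable := by
  have h : zdLattice d ⊆ Set.range (fun n : Fin d → ℤ => (WithLp.toLp 2 (fun i => (n i : ℝ)) : Rd d)) := by
    intro x hx
    choose n hn using hx
    exact ⟨n, by ext i; simp [hn i]⟩
  exact (Set.countable_range _).mono h

/-- If, up to a set of measure zero, `ℝ^d` is the disjoint union of the sets
`{gP + k : g ∈ G, k ∈ ℤ^d}`, then `D = ⋃_{k ∈ ℤ^d} (P + k)` is measurable and, up to a set
of measure zero, `ℝ^d` is the disjoint union of the sets `{gD : g ∈ G}`. -/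
theorem measurable_section_of_group_action {d : ℕ}
    (G : Subgroup ((Rd d) ≃ₗ[ℝ] (Rd d))) [Finite G]
    (hG : ∀ g ∈ G, ⇑g '' zdLattice d = zdLattice d)
    (P : Set (Rd d)) (hPmeas : MeasurableSet P)
    (hPpos : 0 < volume P) (hPfin : volume P < ⊤)
    (hcover : volume ((Set.univ : Set (Rd d)) \
      ⋃ g ∈ G, ⋃ k ∈ zdLattice d, (fun x => g x + k) '' P) = 0)
    (hdisj : ∀ g ∈ G, ∀ g' ∈ G, ∀ k ∈ zdLattice d, ∀ k' ∈ zdLattice d,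
      (g, k) ≠ (g', k') →
      volume (((fun x => g x + k) '' P) ∩ ((fun x => g' x + k') '' P)) = 0) :
    MeasurableSet (⋃ k ∈ zdLattice d, (fun x : Rd d => x + k) '' P) ∧
    volume ((Set.univ : Set (Rd d)) \
      ⋃ g ∈ G, ⇑g '' (⋃ k ∈ zdLattice d, (fun x : Rd d => x + k) '' P)) = 0 ∧
    ∀ g ∈ G, ∀ g' ∈ G, g ≠ g' →
      volume ((⇑g '' (⋃ k ∈ zdLattice d, (fun x : Rd d => x + k) '' P)) ∩
        (⇑g' '' (⋃ k ∈ zdLattice d, (fun x : Rd d => x + k) '' P))) = 0 := by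
  have hcount := zdLattice_countable d
  have himg : ∀ g ∈ G, ⇑g '' (⋃ k ∈ zdLattice d, (fun x : Rd d => x + k) '' P)
      = ⋃ k ∈ zdLattice d, (fun x => g x + k) '' P := by
    intro g hg
    ext x
    simp only [Set.mem_image, Set.mem_iUnion]
    constructor
    · rintro ⟨y, ⟨k, hk, p, hp, rfl⟩, rfl⟩
      refine ⟨g k, ?_, p, hp, by simp [map_add]⟩
      rw [← hG g hg]
      exact ⟨k, hk, rfl⟩
    · rintro ⟨k, hk, p, hp, rfl⟩
      rw [← hG g hg] at hk
      obtain ⟨k', hk', rfl⟩ := hk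
      exact ⟨p + k', ⟨k', hk', p, hp, rfl⟩, by simp [map_add]⟩
  refine ⟨?_, ?_, ?_⟩
  · refine MeasurableSet.biUnion hcount fun k _ => ?_
    rw [Set.image_add_right]
    exact hPmeas.preimage (measurable_add_const (-k))
  · convert hcover using 3
    exact Set.iUnion₂_congr himg
  · intro g hg g' hg' hne
    rw [himg g hg, himg g' hg']
    have hsub : (⋃ k ∈ zdLattice d, (fun x => g x + k) '' P) ∩
        (⋃ k' ∈ zdLattice d, (fun x => g' x + k') '' P) ⊆
        ⋃ k ∈ zdLattice d, ⋃ k' ∈ zdLattice d,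
          ((fun x => g x + k) '' P ∩ (fun x => g' x + k') '' P) := by
      rintro x ⟨h1, h2⟩
      simp only [Set.mem_iUnion] at h1 h2 ⊢
      obtain ⟨k, hk, hx1⟩ := h1
      obtain ⟨k', hk', hx2⟩ := h2
      exact ⟨k, hk, k', hk', hx1, hx2⟩
    refine measure_mono_null hsub ?_
    rw [measure_biUnion_null_iff hcount]
    intro k hk
    rw [measure_biUnion_null_iff hcount]
    intro k' hk'
    exact hdisj g hg g' hg' k hk k' hk' (fun h => hne (congrArg Prod.fst h))
end
end
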